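/- If a real quadratic irrational w has purely periodic '−' continued fraction expansion w = (b₀, ..., b_r repeated), then 1/w̃ has '−' continued fraction expansion (b_r, ..., b₀ repeated), where w̃ is the Galois conjugate of w. -/

import Mathlib

/-
Let `T y = (⌈y⌉ - y)⁻¹`, so that `mIter w n = Tⁿ w` and the digits are `bₙ = ⌈Tⁿ w⌉`.
Two irrationals with the same digits coincide: the product of the first `n` iterates grows at
least linearly in `n`, which forces `|x - y| ≤ 2 / n`. Hence periodic digits make `w` a fixed
point of `T^(r+1)`. Conjugation `p + q w ↦ p + q w̃` commutes with `y ↦ (k - y)⁻¹`, so the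
conjugates `w̃ₙ` of `Tⁿ w` satisfy `w̃ₙ₊₁ = (bₙ - w̃ₙ)⁻¹` and are periodic as well. As all
`bₙ ≥ 2`, one `w̃ₙ` outside `(0, 1)` would force every `w̃ₙ > 1`; then `w̃` would have the same
digits as `w`, i.e. `w̃ = w`, which is absurd. So `0 < w̃ₙ < 1`, whence `w̃ₙ₊₁⁻¹ = bₙ - w̃ₙ` has
first digit `bₙ` and `T w̃ₙ₊₁⁻¹ = w̃ₙ⁻¹`: the orbit of `w̃⁻¹` runs through the conjugates backwards.
-/

/-- Iterates of the minus continued fraction algorithm. -/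
noncomputable def mIter (x : ℝ) (n : ℕ) : ℝ := (fun y => ((⌈y⌉ : ℝ) - y)⁻¹)^[n] x

/-- The n-th partial quotient of the minus continued fraction of x. -/
noncomputable def mDigit (x : ℝ) (n : ℕ) : ℤ := ⌈mIter x n⌉

open Function Set

noncomputable def mStep (y : ℝ) : ℝ := ((⌈y⌉ : ℝ) - y)⁻¹

lemma mIter_eq_iterate (x : ℝ) (n : ℕ) : mIter x n = mStep^[n] x := rfl

lemma mIter_succ (x : ℝ) (n : ℕ) : mIter x (n + 1) = mStep (mIter x n) :=
  Function.iterate_succ_apply' _ _ _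

lemma mIter_mIter (x : ℝ) (m n : ℕ) : mIter (mIter x m) n = mIter x (n + m) :=
  (Function.iterate_add_apply _ _ _ _).symm

lemma mDigit_mIter (x : ℝ) (m n : ℕ) : mDigit (mIter x m) n = mDigit x (n + m) := by
  rw [mDigit, mIter_mIter, mDigit]

lemma mIter_eq_mDigit_sub_inv (x : ℝ) (n : ℕ) :
    mIter x n = mDigit x n - (mIter x (n + 1))⁻¹ := by
  rw [mIter_succ, mStep, inv_inv, mDigit]
  ring

lemma Irrational.mStep {y : ℝ} (hy : Irrational y) : Irrational (mStep y) :=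
  (hy.intCast_sub _).inv

lemma Irrational.mIter {x : ℝ} (hx : Irrational x) (n : ℕ) : Irrational (mIter x n) := by
  induction n with
  | zero => exact hx
  | succ n ih => rw [mIter_succ]; exact ih.mStep

lemma one_lt_mStep {y : ℝ} (hy : Irrational y) : 1 < mStep y := by
  have hlt : y < ⌈y⌉ := (Int.le_ceil y).lt_of_ne (hy.ne_int _)
  have hle : (⌈y⌉ : ℝ) < y + 1 := Int.ceil_lt_add_one y
  exact one_lt_inv_iff₀.2 ⟨by linarith, by linarith⟩

lemma one_lt_mIter_succ {x : ℝ} (hx : Irrational x) (n : ℕ) : 1 < mIter x (n + 1) := by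
  rw [mIter_succ]
  exact one_lt_mStep (hx.mIter n)

lemma two_le_mDigit_succ {x : ℝ} (hx : Irrational x) (n : ℕ) : 2 ≤ mDigit x (n + 1) := by
  have h : (1 : ℝ) < mDigit x (n + 1) := (one_lt_mIter_succ hx n).trans_le (Int.le_ceil _)
  exact_mod_cast h

section Uniqueness

open Finset

variable {x y : ℝ}

lemma sub_one_le_sub_one_mul_mIter (hx : Irrational x) (n : ℕ) :
    mIter x (n + 2) - 1 ≤ (mIter x (n + 1) - 1) * mIter x (n + 2) := by
  have hd : (2 : ℝ) ≤ mDigit x (n + 1) := by exact_mod_cast two_le_mDigit_succ hx n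
  have hX := one_lt_mIter_succ hx (n + 1)
  have hrec : mIter x (n + 1) * mIter x (n + 2) = mDigit x (n + 1) * mIter x (n + 2) - 1 := by
    rw [mIter_eq_mDigit_sub_inv x (n + 1)]
    field_simp
  nlinarith

lemma one_add_mul_le_prod_mIter (hx : Irrational x) (n : ℕ) :
    1 + n * (mIter x n - 1) ≤ ∏ k ∈ range n, mIter x (k + 1) := by
  induction n with
  | zero => simp
  | succ n ih =>
    have hX := one_lt_mIter_succ hx n
    have hstep : n * (mIter x (n + 1) - 1) ≤ n * (mIter x n - 1) * mIter x (n + 1) := by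
      rcases n with _ | n
      · simp
      · rw [mul_assoc]
        exact mul_le_mul_of_nonneg_left (sub_one_le_sub_one_mul_mIter hx n) (by positivity)
    rw [prod_range_succ]
    push_cast
    nlinarith

lemma sub_mul_prod_mIter (hx : Irrational x) (hy : Irrational y)
    (hd : ∀ n, mDigit x n = mDigit y n) (n : ℕ) :
    (x - y) * ∏ k ∈ range n, (mIter x (k + 1) * mIter y (k + 1)) = mIter x n - mIter y n := by
  induction n with
  | zero => simp [mIter]
  | succ n ih =>
    have hX := (one_pos.trans (one_lt_mIter_succ hx n)).ne'
    have hY := (one_pos.trans (one_lt_mIter_succ hy n)).ne'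
    rw [prod_range_succ, ← mul_assoc, ih, mIter_eq_mDigit_sub_inv x n,
      mIter_eq_mDigit_sub_inv y n, hd n]
    field_simp
    ring

lemma abs_sub_mul_le_two (hx : Irrational x) (hy : Irrational y)
    (hd : ∀ n, mDigit x n = mDigit y n) (n : ℕ) : |x - y| * (n + 1) ≤ 2 := by
  have hX := one_lt_mIter_succ hx n
  have hY := one_lt_mIter_succ hy n
  have hQ := one_add_mul_le_prod_mIter hx (n + 1)
  have hR := one_add_mul_le_prod_mIter hy (n + 1)
  have htel := congrArg abs (sub_mul_prod_mIter hx hy hd (n + 1))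
  rw [prod_mul_distrib, abs_mul] at htel
  set Q := ∏ k ∈ range (n + 1), mIter x (k + 1)
  set R := ∏ k ∈ range (n + 1), mIter y (k + 1)
  push_cast at hQ hR
  have hQ1 : 1 ≤ Q := by nlinarith
  have hR1 : 1 ≤ R := by nlinarith
  have hgap : |mIter x (n + 1) - mIter y (n + 1)| ≤
      (mIter x (n + 1) - 1) + (mIter y (n + 1) - 1) := by
    rw [abs_le]; constructor <;> linarith
  rw [abs_of_pos (by positivity : 0 < Q * R)] at htel
  have : |x - y| * (n + 1) * (Q * R) ≤ 2 * (Q * R) := by nlinarith [abs_nonneg (x - y)]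
  exact le_of_mul_le_mul_right this (by positivity)

theorem eq_of_mDigit_eq (hx : Irrational x) (hy : Irrational y)
    (hd : ∀ n, mDigit x n = mDigit y n) : x = y := by
  refine eq_of_forall_dist_le fun ε hε => ?_
  obtain ⟨n, hn⟩ := exists_nat_gt (2 / ε)
  have h := abs_sub_mul_le_two hx hy hd n
  rw [Real.dist_eq]
  rw [div_lt_iff₀ hε] at hn
  nlinarith [abs_nonneg (x - y)]

end Uniqueness

def IsGaloisConj (w w' x x' : ℝ) : Prop := ∃ p q : ℚ, x = p + q * w ∧ x' = p + q * w'

namespace IsGaloisConj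

variable {w w' x x' : ℝ}

lemma self : IsGaloisConj w w' w w' := ⟨0, 1, by simp, by simp⟩

lemma intCast_sub (h : IsGaloisConj w w' x x') (k : ℤ) :
    IsGaloisConj w w' (k - x) (k - x') := by
  obtain ⟨p, q, rfl, rfl⟩ := h
  exact ⟨k - p, -q, by push_cast; ring, by push_cast; ring⟩

-- `x⁻¹ = x' / (x * x')`, and `x * x'` is rational since it is symmetric in `w, w'`.
lemma inv {s t : ℚ} (hs : w + w' = s) (ht : w * w' = t) (h : IsGaloisConj w w' x x')
    (hx : x ≠ 0) (hx' : x' ≠ 0) : IsGaloisConj w w' x⁻¹ x'⁻¹ := by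
  obtain ⟨p, q, rfl, rfl⟩ := h
  set D : ℚ := p ^ 2 + p * q * s + q ^ 2 * t
  have hD : (D : ℝ) = (p + q * w) * (p + q * w') := by
    simp only [D]; push_cast; rw [← hs, ← ht]; ring
  have hD0 : (D : ℝ) ≠ 0 := hD ▸ mul_ne_zero hx hx'
  have hw' : w' = s - w := by rw [← hs]; ring
  refine ⟨(p + q * s) / D, -q / D, ?_, ?_⟩ <;>
  · rw [eq_comm, ← mul_eq_one_iff_eq_inv₀ (by assumption)]
    push_cast
    field_simp
    rw [hD, hw']
    ring

lemma irrational (h : IsGaloisConj w w' x x') (hx : Irrational x) (hw' : Irrational w') :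
    Irrational x' := by
  obtain ⟨p, q, rfl, rfl⟩ := h
  have hq : q ≠ 0 := by
    rintro rfl
    exact hx ⟨p, by simp⟩
  exact (hw'.ratCast_mul hq).ratCast_add p

lemma right_eq_of_self (h : IsGaloisConj w w' w x') (hw : Irrational w) : x' = w' := by
  obtain ⟨p, q, hpq, rfl⟩ := h
  have hq : q = 1 := by
    by_contra hq
    refine hw ⟨p / (1 - q), ?_⟩
    have : (1 - q : ℝ) ≠ 0 := sub_ne_zero.2 (by exact_mod_cast Ne.symm hq)
    push_cast
    field_simp
    linarith
  subst hq
  have hp : (p : ℝ) = 0 := by push_cast at hpq; linarith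
  simp [hp]

end IsGaloisConj

noncomputable def digitOrbit (d : ℕ → ℤ) (y : ℝ) : ℕ → ℝ
  | 0 => y
  | n + 1 => ((d n : ℝ) - digitOrbit d y n)⁻¹

section DigitOrbit

variable {d : ℕ → ℤ} {y : ℝ}

lemma digitOrbit_eq_sub_inv (d : ℕ → ℤ) (y : ℝ) (n : ℕ) :
    digitOrbit d y n = d n - (digitOrbit d y (n + 1))⁻¹ := by
  rw [digitOrbit, inv_inv]
  ring

lemma digitOrbit_periodic {m : ℕ} (hd : Periodic d m) (hm : digitOrbit d y m = y) :
    Periodic (digitOrbit d y) m := by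
  intro n
  induction n with
  | zero => rw [zero_add, hm]; rfl
  | succ n ih => rw [add_right_comm, digitOrbit, digitOrbit, hd, ih]

lemma mIter_eq_digitOrbit (hceil : ∀ n, ⌈digitOrbit d y n⌉ = d n) (n : ℕ) :
    mIter y n = digitOrbit d y n := by
  induction n with
  | zero => rfl
  | succ n ih => rw [mIter_succ, ih, mStep, hceil, digitOrbit]

lemma ceil_intCast_sub {t : ℝ} (ht₀ : 0 < t) (ht₁ : t < 1) (k : ℤ) : ⌈(k : ℝ) - t⌉ = k := by
  rw [Int.ceil_eq_iff]
  constructor <;> linarith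

lemma mStep_intCast_sub {t : ℝ} (ht₀ : 0 < t) (ht₁ : t < 1) (k : ℤ) : mStep (k - t) = t⁻¹ := by
  rw [mStep, ceil_intCast_sub ht₀ ht₁, sub_sub_cancel]

lemma one_lt_intCast_sub_inv {k : ℤ} {t : ℝ} (hk : 2 ≤ k) (ht₁ : t ≠ 1) (ht : t ∉ Ioo 0 1) :
    1 < k - t⁻¹ := by
  have hk' : (2 : ℝ) ≤ k := by exact_mod_cast hk
  rcases le_or_gt t 0 with h | h
  · linarith [inv_nonpos.2 h]
  · have : 1 < t := lt_of_le_of_ne (not_lt.1 fun h' => ht ⟨h, h'⟩) ht₁.symm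
    linarith [inv_lt_one_of_one_lt₀ this]

-- Since every `d n ≥ 2`, leaving `(0, 1)` propagates backwards along the orbit, and by
-- periodicity it then reaches every index.
lemma one_lt_digitOrbit_of_not_mem_Ioo {m n₀ : ℕ} (hm : 0 < m) (hd : ∀ n, 2 ≤ d n)
    (hper : Periodic (digitOrbit d y) m) (hne : ∀ n, digitOrbit d y n ≠ 1)
    (hn₀ : digitOrbit d y n₀ ∉ Ioo 0 1) (n : ℕ) : 1 < digitOrbit d y n := by
  have hback : ∀ j n, digitOrbit d y (n + j + 1) ∉ Ioo 0 1 → 1 < digitOrbit d y n := by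
    intro j
    induction j with
    | zero =>
      intro n h
      rw [digitOrbit_eq_sub_inv]
      exact one_lt_intCast_sub_inv (hd n) (hne _) h
    | succ j ih =>
      intro n h
      rw [digitOrbit_eq_sub_inv]
      refine one_lt_intCast_sub_inv (hd n) (hne _) fun h' => ?_
      exact (ih (n + 1) (by rwa [add_right_comm n 1 j, add_assoc n j 1])).not_gt h'.2
  apply hback (n₀ + (n + 1) * m - n - 1)
  have hle : n + 1 ≤ (n + 1) * m := Nat.le_mul_of_pos_right _ hm
  rwa [show n + (n₀ + (n + 1) * m - n - 1) + 1 = n₀ + (n + 1) * m by omega,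
    ← Nat.cast_id (n + 1), hper.nat_mul (n + 1) n₀]

lemma mIter_inv_digitOrbit (h01 : ∀ n, digitOrbit d y n ∈ Ioo 0 1) {N k : ℕ} (hk : k ≤ N) :
    mIter (digitOrbit d y N)⁻¹ k = (digitOrbit d y (N - k))⁻¹ := by
  induction k with
  | zero => rfl
  | succ k ih =>
    obtain ⟨j, hj⟩ : ∃ j, N - k = j + 1 := ⟨N - k - 1, by omega⟩
    rw [mIter_succ, ih (by omega), hj, digitOrbit, inv_inv, mStep_intCast_sub (h01 j).1 (h01 j).2,
      show N - (k + 1) = j by omega]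

lemma mDigit_inv_digitOrbit (h01 : ∀ n, digitOrbit d y n ∈ Ioo 0 1) {N k : ℕ} (hk : k < N) :
    mDigit (digitOrbit d y N)⁻¹ k = d (N - 1 - k) := by
  obtain ⟨j, hj⟩ : ∃ j, N - k = j + 1 := ⟨N - k - 1, by omega⟩
  rw [mDigit, mIter_inv_digitOrbit h01 hk.le, hj, digitOrbit, inv_inv,
    ceil_intCast_sub (h01 j).1 (h01 j).2, show N - 1 - k = j by omega]

end DigitOrbit

section Conjugate

variable {w w' : ℝ} {s t : ℚ}

lemma isGaloisConj_mIter_digitOrbit (hs : w + w' = s) (ht : w * w' = t) (hw : Irrational w)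
    (hw' : Irrational w') (n : ℕ) :
    IsGaloisConj w w' (mIter w n) (digitOrbit (mDigit w) w' n) := by
  induction n with
  | zero => exact IsGaloisConj.self
  | succ n ih =>
    have h := ih.intCast_sub (mDigit w n)
    rw [mIter_succ, mStep, digitOrbit]
    exact h.inv hs ht ((hw.mIter n).intCast_sub _).ne_zero (h.irrational
      ((hw.mIter n).intCast_sub _) hw').ne_zero

lemma irrational_of_add_eq_ratCast (hs : w + w' = s) (hw : Irrational w) : Irrational w' := by
  rw [show w' = s - w by rw [← hs]; ring]
  exact hw.ratCast_sub s

lemma digitOrbit_mDigit_period_eq (hs : w + w' = s) (ht : w * w' = t) (hw : Irrational w)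
    {m : ℕ} (hd : Periodic (mDigit w) m) : digitOrbit (mDigit w) w' m = w' := by
  have hfix : mIter w m = w :=
    eq_of_mDigit_eq (hw.mIter m) hw fun n => by rw [mDigit_mIter, hd]
  have hconj := isGaloisConj_mIter_digitOrbit hs ht hw (irrational_of_add_eq_ratCast hs hw) m
  exact (hfix ▸ hconj).right_eq_of_self hw

lemma digitOrbit_mDigit_mem_Ioo (hs : w + w' = s) (ht : w * w' = t) (hw : Irrational w)
    {m : ℕ} (hm : 0 < m) (hd : Periodic (mDigit w) m) (n₀ : ℕ) :
    digitOrbit (mDigit w) w' n₀ ∈ Ioo 0 1 := by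
  by_contra hn₀
  have hw' := irrational_of_add_eq_ratCast hs hw
  have hd2 : ∀ n, 2 ≤ mDigit w n := fun n => by
    rw [← hd, show n + m = n + m - 1 + 1 by omega]
    exact two_le_mDigit_succ hw _
  have hv1 := one_lt_digitOrbit_of_not_mem_Ioo hm hd2
    (digitOrbit_periodic hd (digitOrbit_mDigit_period_eq hs ht hw hd))
    (fun n => ((isGaloisConj_mIter_digitOrbit hs ht hw hw' n).irrational (hw.mIter n) hw').ne_one)
    hn₀
  have hceil : ∀ n, ⌈digitOrbit (mDigit w) w' n⌉ = mDigit w n := fun n => by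
    rw [digitOrbit_eq_sub_inv, ceil_intCast_sub (inv_pos.2 (one_pos.trans (hv1 _)))
      (inv_lt_one_of_one_lt₀ (hv1 _))]
  have hww' : w' = w := eq_of_mDigit_eq hw' hw fun n => by
    rw [mDigit, mIter_eq_digitOrbit hceil, hceil]
  refine hw ⟨s / 2, ?_⟩
  push_cast
  linarith

theorem mDigit_inv_conj_of_periodic (hs : w + w' = s) (ht : w * w' = t) (hw : Irrational w)
    {m : ℕ} (hm : 0 < m) (hd : Periodic (mDigit w) m) (i : ℕ) :
    mDigit w'⁻¹ i = mDigit w (m - 1 - i % m) := by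
  have h01 := digitOrbit_mDigit_mem_Ioo (w' := w') hs ht hw hm hd
  have hvm := digitOrbit_mDigit_period_eq hs ht hw hd
  have hu : IsPeriodicPt mStep m w'⁻¹ := by
    have h := mIter_inv_digitOrbit h01 (le_refl m)
    rwa [hvm, Nat.sub_self] at h
  rw [mDigit, mIter_eq_iterate, ← hu.iterate_mod_apply, ← mIter_eq_iterate, ← mDigit, ← hvm,
    mDigit_inv_digitOrbit h01 (Nat.mod_lt i hm)]

end Conjugate

theorem stmt_10 (w : ℝ) (hw : Irrational w) (a b c : ℤ) (ha : a ≠ 0)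
    (hq : (a : ℝ) * w ^ 2 + (b : ℝ) * w + (c : ℝ) = 0)
    (r : ℕ) (bs : ℕ → ℤ)
    (hper : ∀ i, mDigit w i = bs (i % (r + 1))) :
    ∀ i, mDigit ((-(b : ℝ) / (a : ℝ) - w)⁻¹) i = bs (r - i % (r + 1)) := by
  have ha' : (a : ℝ) ≠ 0 := by exact_mod_cast ha
  have hs : w + (-(b : ℝ) / a - w) = ((-b / a : ℚ) : ℝ) := by push_cast; ring
  have ht : w * (-(b : ℝ) / a - w) = ((c / a : ℚ) : ℝ) := by
    push_cast
    field_simp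
    linear_combination -hq
  have hd : Periodic (mDigit w) (r + 1) := fun n => by rw [hper, hper, Nat.add_mod_right]
  intro i
  rw [mDigit_inv_conj_of_periodic hs ht hw r.add_one_pos hd, hper, Nat.add_sub_cancel,
    Nat.mod_eq_of_lt (by omega)]
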